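/- For every continuous function f : [A, B] → ℝ and every ε > 0, there exists an APL function h (for some number of hinges S and parameters a_s, b_s) such that |h(x) - f(x)| < ε for all x ∈ [A, B]. -/

import Mathlib

/-!
Subtracting `max 0 x` reduces the claim to approximating `g = f - max 0 x` by linear combinations
of the decreasing hinges `max 0 (b - x)`. Second differences of hinges give the hat functions
`max 0 (1 - |(x - c) / h|)`, which on a grid of mesh `h` form a partition of unity on `[A, B]`
(the sum telescopes). The piecewise-linear interpolant `∑ g(xᵢ) · hatᵢ` is then a convex
combination of values of `g` at nodes within `h` of `x`, so uniform continuity of `g` makes it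
uniformly close to `g`.
-/

open Finset

def hat (t : ℝ) : ℝ := max 0 (1 - |t|)

lemma hat_nonneg (t : ℝ) : 0 ≤ hat t := le_max_left _ _

lemma abs_lt_one_of_hat_ne_zero {t : ℝ} (h : hat t ≠ 0) : |t| < 1 := by
  by_contra! ht
  exact h (max_eq_left (by linarith))

lemma hat_eq_ramps (t : ℝ) :
    hat t = max 0 (1 - t) - 2 * max 0 (-t) + max 0 (-1 - t) := by
  unfold hat
  rcases le_total 0 t with h | h
  · rw [abs_of_nonneg h, max_eq_left (by linarith : -t ≤ 0),
      max_eq_left (by linarith : -1 - t ≤ 0)]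
    ring
  · rw [abs_of_nonpos h, max_eq_right (by linarith : 0 ≤ -t),
      max_eq_right (by linarith : 0 ≤ 1 - t)]
    rcases le_total t (-1) with h' | h'
    · rw [max_eq_left (by linarith), max_eq_right (by linarith)]; ring
    · rw [max_eq_right (by linarith), max_eq_left (by linarith)]; ring

lemma sum_range_hat_sub_eq_one {n : ℕ} {t : ℝ} (h0 : 0 ≤ t) (hn : t ≤ n) :
    ∑ i ∈ range (n + 1), hat (t - i) = 1 := by
  set D : ℕ → ℝ := fun i => max 0 (i - t) - max 0 (i - 1 - t) with hD
  have hstep : ∀ i : ℕ, hat (t - i) = D (i + 1) - D i := by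
    intro i
    simp only [hD, hat_eq_ramps, Nat.cast_succ]
    ring_nf
  rw [sum_congr rfl fun i _ => hstep i, sum_range_sub]
  simp only [hD, Nat.cast_zero, Nat.cast_succ]
  rw [max_eq_right (by linarith), max_eq_right (by linarith), max_eq_left (by linarith),
    max_eq_left (by linarith)]
  ring

def hinge (b x : ℝ) : ℝ := max 0 (-x + b)

def hingeSpan : Submodule ℝ (ℝ → ℝ) := Submodule.span ℝ (Set.range hinge)

lemma hinge_mem_hingeSpan (b : ℝ) : hinge b ∈ hingeSpan := Submodule.subset_span ⟨b, rfl⟩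

lemma exists_eq_sum_hinge_of_mem_hingeSpan {φ : ℝ → ℝ} (hφ : φ ∈ hingeSpan) :
    ∃ (S : ℕ) (a b : Fin S → ℝ), ∀ x, φ x = ∑ s, a s * max 0 (-x + b s) := by
  obtain ⟨S, a, g, rfl⟩ := Submodule.mem_span_set'.mp hφ
  choose b hb using fun s => (g s).2
  refine ⟨S, a, b, fun x => ?_⟩
  simp [← hb, hinge]

lemma hat_div_sub_mem_hingeSpan {h : ℝ} (hh : 0 < h) (a c : ℝ) :
    (fun x => hat ((x - a) / h - c)) ∈ hingeSpan := by
  have hscale : ∀ u, max 0 (u / h) = h⁻¹ * max 0 u := fun u => by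
    rw [mul_max_of_nonneg _ _ (inv_nonneg.2 hh.le), mul_zero, div_eq_inv_mul]
  have heq : (fun x => hat ((x - a) / h - c)) =
      h⁻¹ • hinge (a + h * (c + 1)) - (2 * h⁻¹) • hinge (a + h * c) +
        h⁻¹ • hinge (a + h * (c - 1)) := by
    funext x
    have e₁ : 1 - ((x - a) / h - c) = (-x + (a + h * (c + 1))) / h := by field_simp; ring
    have e₂ : -((x - a) / h - c) = (-x + (a + h * c)) / h := by field_simp; ring
    have e₃ : -1 - ((x - a) / h - c) = (-x + (a + h * (c - 1))) / h := by field_simp; ring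
    simp only [hat_eq_ramps, e₁, e₂, e₃, hscale, Pi.add_apply, Pi.sub_apply, Pi.smul_apply,
      smul_eq_mul, hinge]
    ring
  rw [heq]
  have hmem (r b : ℝ) : r • hinge b ∈ hingeSpan :=
    Submodule.smul_mem _ _ (hinge_mem_hingeSpan b)
  exact add_mem (sub_mem (hmem _ _) (hmem _ _)) (hmem _ _)

lemma abs_sum_mul_sub_le_of_sum_eq_one {ι : Type*} (s : Finset ι) {w y : ι → ℝ} {z η : ℝ}
    (hw : ∀ i ∈ s, 0 ≤ w i) (hw₁ : ∑ i ∈ s, w i = 1)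
    (hy : ∀ i ∈ s, w i ≠ 0 → |y i - z| ≤ η) :
    |∑ i ∈ s, w i * y i - z| ≤ η := by
  have hterm : ∀ i ∈ s, |w i * (y i - z)| ≤ w i * η := fun i hi => by
    rw [abs_mul, abs_of_nonneg (hw i hi)]
    rcases eq_or_ne (w i) 0 with h | h
    · simp [h]
    · exact mul_le_mul_of_nonneg_left (hy i hi h) (hw i hi)
  calc |∑ i ∈ s, w i * y i - z| = |∑ i ∈ s, w i * (y i - z)| := by
        simp only [mul_sub, sum_sub_distrib, ← sum_mul, hw₁, one_mul]
    _ ≤ ∑ i ∈ s, w i * η := (abs_sum_le_sum_abs _ _).trans (sum_le_sum hterm)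
    _ = η := by rw [← sum_mul, hw₁, one_mul]

lemma Continuous.exists_mem_hingeSpan_forall_abs_sub_lt {g : ℝ → ℝ} (hg : Continuous g)
    (A B : ℝ) {ε : ℝ} (hε : 0 < ε) :
    ∃ φ ∈ hingeSpan, ∀ x ∈ Set.Icc A B, |φ x - g x| < ε := by
  -- Nodes contributing at `x ∈ [A, B]` lie within `h ≤ 1` of `x`; the last node may exceed `B`.
  obtain ⟨δ, hδ, hgδ⟩ := Metric.uniformContinuousOn_iff.mp
    ((isCompact_Icc (a := A - 1) (b := B + 1)).uniformContinuousOn_of_continuous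
      hg.continuousOn) (ε / 2) (half_pos hε)
  set h := min 1 (δ / 2)
  have hh₀ : 0 < h := lt_min one_pos (half_pos hδ)
  set n := ⌈(B - A) / h⌉₊
  refine ⟨∑ i ∈ range (n + 1), g (A + i * h) • fun x => hat ((x - A) / h - i),
    sum_mem fun i _ => Submodule.smul_mem _ _ (hat_div_sub_mem_hingeSpan hh₀ _ _),
    fun x hx => ?_⟩
  simp only [Finset.sum_apply, Pi.smul_apply, smul_eq_mul, mul_comm (g _)]
  have ht₀ : 0 ≤ (x - A) / h := div_nonneg (by linarith [hx.1]) hh₀.le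
  have htn : (x - A) / h ≤ n :=
    (div_le_div_of_nonneg_right (by linarith [hx.2]) hh₀.le).trans (Nat.le_ceil _)
  refine (abs_sum_mul_sub_le_of_sum_eq_one _ (fun i _ => hat_nonneg _)
    (sum_range_hat_sub_eq_one ht₀ htn) fun i _ hi => ?_).trans_lt (half_lt_self hε)
  have hnode : |A + i * h - x| < h := by
    have hi' := abs_lt_one_of_hat_ne_zero hi
    rwa [show (x - A) / h - i = -(A + i * h - x) / h by field_simp; ring, abs_div, abs_neg,
      abs_of_pos hh₀, div_lt_one hh₀] at hi'
  have hh₁ : h ≤ 1 := min_le_left _ _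
  have hhδ : h < δ := (min_le_right _ _).trans_lt (half_lt_self hδ)
  obtain ⟨hnode₁, hnode₂⟩ := abs_lt.mp hnode
  refine (hgδ _ ⟨by linarith [hx.1], by linarith [hx.2]⟩ x
    ⟨by linarith [hx.1], by linarith [hx.2]⟩ ?_).le
  rw [Real.dist_eq]
  exact hnode.trans hhδ

lemma ContinuousOn.exists_mem_hingeSpan_forall_abs_sub_lt {g : ℝ → ℝ} {A B : ℝ}
    (hg : ContinuousOn g (Set.Icc A B)) {ε : ℝ} (hε : 0 < ε) :
    ∃ φ ∈ hingeSpan, ∀ x ∈ Set.Icc A B, |φ x - g x| < ε := by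
  obtain ⟨G, hG⟩ := ContinuousMap.exists_restrict_eq isClosed_Icc ⟨_, hg.domRestrict⟩
  obtain ⟨φ, hφ, hφG⟩ := G.continuous.exists_mem_hingeSpan_forall_abs_sub_lt A B hε
  refine ⟨φ, hφ, fun x hx => ?_⟩
  have hGg : G x = g x := DFunLike.congr_fun hG ⟨x, hx⟩
  rw [← hGg]
  exact hφG x hx

/-- APL functions uniformly approximate continuous functions on a
compact interval. -/
theorem apl_uniform_approx (A B : ℝ) (f : ℝ → ℝ)
    (hf : ContinuousOn f (Set.Icc A B)) (ε : ℝ) (hε : 0 < ε) :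
    ∃ (S : ℕ) (a b : Fin S → ℝ), ∀ x ∈ Set.Icc A B,
      |(max 0 x + ∑ s, a s * max 0 (-x + b s)) - f x| < ε := by
  have hg : ContinuousOn (fun x => f x - max 0 x) (Set.Icc A B) :=
    hf.sub (continuous_const.max continuous_id).continuousOn
  obtain ⟨φ, hφ, hφf⟩ := hg.exists_mem_hingeSpan_forall_abs_sub_lt hε
  obtain ⟨S, a, b, hab⟩ := exists_eq_sum_hinge_of_mem_hingeSpan hφ
  refine ⟨S, a, b, fun x hx => ?_⟩
  rw [← hab]
  convert hφf x hx using 2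
  ring
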